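/- Let $f: \mathbb{R}^m \times \mathcal{U} \times \mathcal{Z} \to \mathbb{R}^q$ be given by $f(\gamma, U, Z) = A s + B(U)\gamma + c(U,Z)$ where $A s$ is fixed, $B(U) = (\Psi^\top \Psi_M + E)\,\mathrm{bd}(U)$ with $\mathrm{bd}(U)$ block-diagonal with unit-norm blocks $u_j$, and $c$ as in the paper. If $(\hat\gamma, \hat U, \hat Z)$ satisfy the KKT stationarity conditions of the randomized group lasso with randomization $\omega$, then $\omega = f(\hat\gamma, \hat U, \hat Z)$. -/
import Mathlib


open Matrix

lemma aux_mulvec {p : ℕ} {B : Fin p → ℕ}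
    (Q : Matrix ((j : Fin p) × Fin (B j)) ((j : Fin p) × Fin (B j)) ℝ)
    (M : Finset (Fin p)) (γ : Fin p → ℝ) (u : (j : Fin p) × Fin (B j) → ℝ)
    (βfull : (j : Fin p) × Fin (B j) → ℝ)
    (hβfull : ∀ i, βfull i = if i.1 ∈ M then γ i.1 * u i else 0)
    (Bmat : Matrix ((j : Fin p) × Fin (B j)) (Fin p) ℝ)
    (hBmat : ∀ i j, Bmat i j = if j ∈ M then
      (Q.mulVec (fun i' => if i'.1 = j then u i' else 0)) i else 0) :
    Q.mulVec βfull = Bmat.mulVec γ := by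
  funext i
  simp only [mulVec, dotProduct, hBmat, hβfull]
  calc ∑ i', Q i i' * (if i'.1 ∈ M then γ i'.1 * u i' else 0)
      = ∑ i', ∑ j : Fin p, Q i i' * (if i'.1 = j ∧ j ∈ M then u i' * γ j else 0) := by
        refine Finset.sum_congr rfl fun i' _ => ?_
        rw [← Finset.mul_sum]
        congr 1
        have h : ∀ j : Fin p, (if i'.1 = j ∧ j ∈ M then u i' * γ j else 0)
            = if i'.1 = j then (if j ∈ M then u i' * γ j else 0) else 0 := by
          intro j; by_cases h : i'.1 = j <;> simp [h]
        simp only [h, Finset.sum_ite_eq, Finset.mem_univ, if_true]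
        by_cases hm : i'.1 ∈ M <;> simp [hm, mul_comm]
    _ = ∑ j : Fin p, (if j ∈ M then ∑ i', Q i i' * (if i'.1 = j then u i' else 0) else 0) * γ j := by
        rw [Finset.sum_comm]
        refine Finset.sum_congr rfl fun j _ => ?_
        by_cases hj : j ∈ M
        · simp only [hj, if_true, Finset.sum_mul]
          refine Finset.sum_congr rfl fun i' _ => ?_
          by_cases h : i'.1 = j <;> simp [h, hj] <;> ring
        · simp [hj]


/-- Lemma 3 of the paper. If `(γ̂, Û, Ẑ)` satisfy the KKT stationarity
conditions of the randomized group lasso with randomization `ω`, i.e.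
`ω = -Ψᵀy + (ΨᵀΨ + εI)β̂ + sub` where `β̂` stacks `γ̂ⱼûⱼ` on selected groups `j ∈ M` and `0`
elsewhere and `sub` stacks `λⱼûⱼ` (resp. `λⱼẑⱼ`), and `-Ψᵀy` decomposes as `As + e` with
`e` vanishing on the selected coordinates, then `ω = As + B(Û)γ̂ + c(Û, Ẑ)` with
`B(U)` the block matrix `(ΨᵀΨ + εI)bd(U)` and `c(U,Z) = e + sub`. -/
theorem kkt_change_of_variables {n p : ℕ} {B : Fin p → ℕ}
    (Ψ : Matrix (Fin n) ((j : Fin p) × Fin (B j)) ℝ)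
    (y : Fin n → ℝ) (ωv : (j : Fin p) × Fin (B j) → ℝ)
    (M : Finset (Fin p)) (ε : ℝ) (hε : 0 < ε)
    (γ : Fin p → ℝ) (u z : (j : Fin p) × Fin (B j) → ℝ)
    (lam : Fin p → ℝ)
    (hunit : ∀ j ∈ M, ∑ b : Fin (B j), (u ⟨j, b⟩) ^ 2 = 1)
    (hγpos : ∀ j ∈ M, 0 < γ j)
    (hznorm : ∀ j ∉ M, ∑ b : Fin (B j), (z ⟨j, b⟩) ^ 2 ≤ 1)
    -- the solution vector and the subgradient vector of the KKT conditions
    (βfull sub : (j : Fin p) × Fin (B j) → ℝ)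
    (hβfull : ∀ i, βfull i = if i.1 ∈ M then γ i.1 * u i else 0)
    (hsub : ∀ i, sub i = if i.1 ∈ M then lam i.1 * u i else lam i.1 * z i)
    -- KKT stationarity conditions
    (hKKT : ωv = -(Ψᵀ.mulVec y)
      + (Ψᵀ * Ψ + ε • (1 : Matrix ((j : Fin p) × Fin (B j)) ((j : Fin p) × Fin (B j)) ℝ)).mulVec βfull
      + sub)
    -- the decomposition `-Ψᵀ y = A s + (0, Â)` of equation (9)
    (a e : (j : Fin p) × Fin (B j) → ℝ)
    (hdec : -(Ψᵀ.mulVec y) = a + e) (he : ∀ i : (j : Fin p) × Fin (B j), i.1 ∈ M → e i = 0)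
    -- the matrix `B(U)` and the offset `c(U, Z)`
    (Bmat : Matrix ((j : Fin p) × Fin (B j)) (Fin p) ℝ)
    (hBmat : ∀ i j, Bmat i j = if j ∈ M then
      ((Ψᵀ * Ψ + ε • (1 : Matrix ((j : Fin p) × Fin (B j)) ((j : Fin p) × Fin (B j)) ℝ)).mulVec
        (fun i' => if i'.1 = j then u i' else 0)) i else 0)
    (c : (j : Fin p) × Fin (B j) → ℝ) (hc : c = e + sub) :
    ωv = a + Bmat.mulVec γ + c := by
  have key := aux_mulvec (Ψᵀ * Ψ + ε • 1) M γ u βfull hβfull Bmat hBmat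
  rw [hKKT, hdec, hc, key]
  funext i
  simp [Pi.add_apply]
  ring
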